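/- arXiv:1411.3466 — 8 statements merged into one kernel-verified Lean document; each statement's English description precedes it below -/
import Mathlib

section
/- Let (λ_j)_{j∈ℕ} be a non-increasing sequence of non-negative reals with λ_1 > 0, and define for ε > 0 the quantity n(ε) := min{ n ∈ ℕ₀ : λ_{n+1} ≤ ε² }. Then lim_{j→∞} λ_j · (ln j)^{2/s} = 0 (for a fixed s > 0) implies lim_{ε→0} (ln n(ε)) · ε^s = 0. -/
open Filter Topology Real

/-- If the squared singular values satisfy `λ_j (ln j)^{2/s} → 0`, then the
information complexity `n(ε) = min{n : λ_{n+1} ≤ ε²}` satisfies `ln n(ε) · ε^s → 0`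
as `ε → 0⁺`. -/
theorem stmt0 (lam : ℕ → ℝ) (hanti : Antitone lam) (hnonneg : ∀ j, 0 ≤ lam j)
    (hpos : 0 < lam 1) (s : ℝ) (hs : 0 < s)
    (n : ℝ → ℕ) (hn : ∀ ε : ℝ, 0 < ε → n ε = sInf {m : ℕ | lam (m + 1) ≤ ε ^ 2})
    (hlim : Tendsto (fun j : ℕ => lam j * (Real.log j) ^ ((2 : ℝ) / s)) atTop (nhds 0)) :
    Tendsto (fun ε : ℝ => Real.log (n ε) * ε ^ s) (nhdsWithin 0 (Set.Ioi 0)) (nhds 0) := by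
  rw [Metric.tendsto_nhdsWithin_nhds]
  intro δ hδ
  have hs2 : (0:ℝ) < s / 2 := by positivity
  have hδ' : (0:ℝ) < δ ^ ((2:ℝ)/s) := Real.rpow_pos_of_pos hδ _
  rw [Metric.tendsto_atTop] at hlim
  obtain ⟨N, hN⟩ := hlim _ hδ'
  set J : ℕ := max N 3 with hJdef
  have hJ3 : (3:ℕ) ≤ J := le_max_right _ _
  have hJ3' : (3:ℝ) ≤ (J:ℝ) := by exact_mod_cast hJ3
  have hlogJ : 0 < Real.log J := Real.log_pos (by linarith)
  refine ⟨(δ / Real.log J) ^ ((1:ℝ)/s), Real.rpow_pos_of_pos (by positivity) _, ?_⟩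
  intro ε hε hdist
  have hε0 : 0 < ε := hε
  rw [Real.dist_eq, sub_zero] at hdist ⊢
  have hεs : ε ^ s < δ / Real.log J := by
    have h1 : ε ^ s < ((δ / Real.log J) ^ ((1:ℝ)/s)) ^ s :=
      Real.rpow_lt_rpow hε0.le ((le_abs_self ε).trans_lt hdist) hs
    rwa [← Real.rpow_mul (by positivity), one_div_mul_cancel hs.ne', Real.rpow_one] at h1
  have hεspos : 0 < ε ^ s := Real.rpow_pos_of_pos hε0 _
  have hlognn : (0:ℝ) ≤ Real.log (n ε) := Real.log_natCast_nonneg _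
  rw [abs_of_nonneg (mul_nonneg hlognn hεspos.le)]
  by_cases hmJ : n ε < J
  · have hle : Real.log (n ε) ≤ Real.log J := by
      rcases Nat.eq_zero_or_pos (n ε) with h0 | h1
      · simp [h0]; positivity
      · exact Real.log_le_log (by exact_mod_cast h1) (by exact_mod_cast hmJ.le)
    calc Real.log (n ε) * ε ^ s ≤ Real.log J * ε ^ s :=
          mul_le_mul_of_nonneg_right hle hεspos.le
      _ < Real.log J * (δ / Real.log J) := by
          exact mul_lt_mul_of_pos_left hεs hlogJ
      _ = δ := mul_div_cancel₀ _ hlogJ.ne'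
  · push_neg at hmJ
    set m := n ε with hmdef
    have hm1 : 1 ≤ m := le_trans (by norm_num) (hJ3.trans hmJ)
    have hnotmem : (m - 1) ∉ {k : ℕ | lam (k + 1) ≤ ε ^ 2} := by
      apply Nat.notMem_of_lt_sInf
      rw [← hn ε hε0]
      exact Nat.sub_lt hm1 one_pos
    have hsub : m - 1 + 1 = m := Nat.succ_pred_eq_of_pos hm1
    rw [Set.mem_setOf_eq, hsub, not_le] at hnotmem
    -- hnotmem : ε ^ 2 < lam m
    have hlogm : 0 < Real.log m := by
      apply Real.log_pos
      have : (3:ℝ) ≤ (m:ℝ) := le_trans hJ3' (by exact_mod_cast hmJ)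
      linarith
    have hlamm : 0 < lam m := lt_of_le_of_lt (by positivity) hnotmem
    have key : lam m * (Real.log m) ^ ((2:ℝ)/s) < δ ^ ((2:ℝ)/s) := by
      have := hN m (le_trans (le_max_left N 3) hmJ)
      rw [Real.dist_eq, sub_zero] at this
      exact (le_abs_self _).trans_lt this
    have hεs2 : ε ^ s < (lam m) ^ (s/2) := by
      have h1 : (ε ^ (2:ℕ) : ℝ) ^ ((s:ℝ)/2) < (lam m) ^ (s/2) :=
        Real.rpow_lt_rpow (by positivity) hnotmem hs2
      rwa [← Real.rpow_natCast ε 2, ← Real.rpow_mul hε0.le, Nat.cast_ofNat,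
        show (2:ℝ) * (s/2) = s by ring] at h1
    have hmain : Real.log m * (lam m) ^ (s/2) < δ := by
      have h2 : Real.log m * (lam m) ^ (s/2)
          = (lam m * (Real.log m) ^ ((2:ℝ)/s)) ^ (s/2) := by
        rw [Real.mul_rpow hlamm.le (Real.rpow_nonneg hlogm.le _),
          ← Real.rpow_mul hlogm.le,
          show (2:ℝ)/s * (s/2) = 1 by field_simp, Real.rpow_one, mul_comm]
      rw [h2]
      calc (lam m * (Real.log m) ^ ((2:ℝ)/s)) ^ (s/2)
          < (δ ^ ((2:ℝ)/s)) ^ (s/2) :=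
            Real.rpow_lt_rpow (by positivity) key hs2
        _ = δ := by
            rw [← Real.rpow_mul hδ.le, show (2:ℝ)/s * (s/2) = 1 by field_simp,
              Real.rpow_one]
    calc Real.log m * ε ^ s < Real.log m * (lam m) ^ (s/2) :=
          mul_lt_mul_of_pos_left hεs2 hlogm
      _ < δ := hmain
end

section
/- Let (λ'_n)_{n∈ℕ} be a non-increasing sequence in [0,1] with λ'_1 = 1, and for a threshold τ > 0 let n(τ) := #{ j ∈ ℕ : λ'_j > τ } (assumed finite for all τ > 0). Then for every d ∈ ℕ and every τ ∈ (0,1), #{ (j_1,…,j_d) ∈ ℕ^d : ∏_{ℓ=1}^d λ'_{j_ℓ} > τ } ≤ d! · ∏_{ℓ=1}^d #{ j ∈ ℕ : λ'_j > τ^{1/ℓ} }. -/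
open Filter Topology Real

/-- Counting lemma for tensor product problems: the number of multi-indices
`(j₁,…,j_d)` with `∏ λ'_{j_ℓ} > τ` is at most
`d! · ∏_{ℓ=1}^d #{j : λ'_j > τ^{1/ℓ}}`. -/
theorem stmt2 (lam' : ℕ → ℝ) (hanti : Antitone lam')
    (h01 : ∀ j, lam' j ∈ Set.Icc (0 : ℝ) 1) (h1 : lam' 1 = 1)
    (hfin : ∀ τ : ℝ, 0 < τ → {j : ℕ | 1 ≤ j ∧ τ < lam' j}.Finite)
    (d : ℕ) (hd : 1 ≤ d) (τ : ℝ) (hτ : τ ∈ Set.Ioo (0 : ℝ) 1) :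
    {x : Fin d → ℕ | (∀ i, 1 ≤ x i) ∧ τ < ∏ i, lam' (x i)}.ncard ≤
      d.factorial * ∏ ℓ ∈ Finset.range d,
        {j : ℕ | 1 ≤ j ∧ τ ^ ((1 : ℝ) / ((ℓ : ℝ) + 1)) < lam' j}.ncard := by
  obtain ⟨hτ0, hτ1⟩ := hτ
  set Aset : ℕ → Set ℕ := fun ℓ => {j : ℕ | 1 ≤ j ∧ τ ^ ((1 : ℝ) / ((ℓ : ℝ) + 1)) < lam' j}
    with hAset
  set S : Set (Fin d → ℕ) := {x : Fin d → ℕ | (∀ i, 1 ≤ x i) ∧ τ < ∏ i, lam' (x i)} with hS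
  set T : Set (Fin d → ℕ) := Set.pi Set.univ (fun i : Fin d => Aset (i : ℕ)) with hT
  -- key pointwise fact: sorted coordinates land in the Aset's
  have hAfin : ∀ ℓ : ℕ, (Aset ℓ).Finite := fun ℓ =>
    hfin _ (Real.rpow_pos_of_pos hτ0 _)
  have hTfin : T.Finite := Set.Finite.pi (fun i => hAfin _)
  -- the sorting map
  have key : ∀ x ∈ S, ∀ ℓ : Fin d,
      x (Tuple.sort (fun i => lam' (x i)) ℓ) ∈ Aset (ℓ : ℕ) := by
    intro x hx ℓ
    obtain ⟨hx1, hxτ⟩ := hx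
    set g : Fin d → ℝ := fun i => lam' (x i) with hg
    set σ := Tuple.sort g with hσ
    have hmon : Monotone (g ∘ σ) := Tuple.monotone_sort g
    have hg0 : ∀ i, 0 ≤ g i := fun i => (h01 (x i)).1
    have hg1 : ∀ i, g i ≤ 1 := fun i => (h01 (x i)).2
    refine ⟨hx1 _, ?_⟩
    -- τ < (g (σ ℓ)) ^ (ℓ+1)
    have hprod : τ < ∏ i, g (σ i) := by
      rwa [Equiv.prod_comp σ g]
    have h2 : ∏ i, g (σ i) ≤ ∏ i ∈ Finset.Iic ℓ, g (σ i) := by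
      rw [← Finset.prod_mul_prod_compl (Finset.Iic ℓ) (fun i => g (σ i))]
      have h3 : ∏ i ∈ (Finset.Iic ℓ)ᶜ, g (σ i) ≤ 1 :=
        Finset.prod_le_one (fun i _ => hg0 _) (fun i _ => hg1 _)
      have h4 : 0 ≤ ∏ i ∈ Finset.Iic ℓ, g (σ i) :=
        Finset.prod_nonneg (fun i _ => hg0 _)
      nlinarith [h3, h4]
    have h5 : ∏ i ∈ Finset.Iic ℓ, g (σ i) ≤ (g (σ ℓ)) ^ ((ℓ : ℕ) + 1) := by
      have : ∏ i ∈ Finset.Iic ℓ, g (σ i) ≤ ∏ _i ∈ Finset.Iic ℓ, g (σ ℓ) :=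
        Finset.prod_le_prod (fun i _ => hg0 _)
          (fun i hi => hmon (Finset.mem_Iic.mp hi))
      rwa [Finset.prod_const, Fin.card_Iic] at this
    have h6 : τ < (g (σ ℓ)) ^ ((ℓ : ℕ) + 1) := lt_of_lt_of_le hprod (le_trans h2 h5)
    have hgpos : 0 ≤ g (σ ℓ) := hg0 _
    have h7 : τ ^ ((1 : ℝ) / (((ℓ : ℕ) : ℝ) + 1)) < g (σ ℓ) := by
      have hn : ((ℓ : ℕ) + 1 : ℕ) ≠ 0 := Nat.succ_ne_zero _
      have := Real.rpow_lt_rpow (le_of_lt hτ0) h6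
        (by positivity : (0 : ℝ) < (((ℓ : ℕ) + 1 : ℕ) : ℝ)⁻¹)
      have hcast : ((((ℓ : ℕ) + 1 : ℕ)) : ℝ)⁻¹ = (1 : ℝ) / (((ℓ : ℕ) : ℝ) + 1) := by
        push_cast; ring
      rwa [Real.pow_rpow_inv_natCast hgpos hn, hcast] at this
    exact h7
  -- injection from S into Perm × T
  classical
  have hScard : S.ncard ≤ Nat.card (Equiv.Perm (Fin d) × T) := by
    have hfinT : Finite T := hTfin
    have hfinP : Finite (Equiv.Perm (Fin d) × T) := by infer_instance
    refine Nat.card_le_card_of_injective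
      (fun y : S => ((Tuple.sort (fun i => lam' (y.1 i)),
        ⟨fun ℓ => y.1 (Tuple.sort (fun i => lam' (y.1 i)) ℓ),
          fun ℓ _ => key y.1 y.2 ℓ⟩) : Equiv.Perm (Fin d) × T)) ?_
    intro a b hab
    obtain ⟨hab1, hab2⟩ := Prod.mk.injEq .. ▸ hab
    apply Subtype.ext
    have hab2' := congrArg Subtype.val hab2
    funext i
    have := congrFun hab2' ((Tuple.sort (fun i => lam' (a.1 i)))⁻¹ i)
    simpa [hab1] using this
  have hcardT : Nat.card T = ∏ i : Fin d, (Aset (i : ℕ)).ncard := by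
    rw [Nat.card_congr (Equiv.Set.univPi (fun i : Fin d => Aset (i : ℕ))),
      Nat.card_pi]
    rfl
  have hcardP : Nat.card (Equiv.Perm (Fin d) × T)
      = d.factorial * ∏ i : Fin d, (Aset (i : ℕ)).ncard := by
    rw [Nat.card_prod, hcardT, Nat.card_eq_fintype_card, Fintype.card_perm,
      Fintype.card_fin]
  calc S.ncard ≤ Nat.card (Equiv.Perm (Fin d) × T) := hScard
    _ = d.factorial * ∏ i : Fin d, (Aset (i : ℕ)).ncard := hcardP
    _ = d.factorial * ∏ ℓ ∈ Finset.range d, (Aset ℓ).ncard := by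
        rw [Fin.prod_univ_eq_prod_range (fun ℓ => (Aset ℓ).ncard)]
end

section
/- Let L > 1, t > 0, and let (λ_n)_{n∈ℕ} be a non-increasing sequence of reals in (0, ∞) with λ_n → 0. Define n(ε) := min{ n ∈ ℕ₀ : λ_{n+1} ≤ ε² } for ε > 0. If lim_{k→∞} (ln n(L^{-k})) / k^t = 0, then lim_{n→∞} (ln λ_n^{-1}) / (ln n)^{1/t} = ∞. -/
open Filter Topology Real

/-- If `ln n(L^{-k}) / k^t → 0`, then `ln λ_n^{-1} / (ln n)^{1/t} → ∞`. -/
theorem stmt5 (L : ℝ) (hL : 1 < L) (t : ℝ) (ht : 0 < t)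
    (lam : ℕ → ℝ) (hanti : Antitone lam) (hpos : ∀ m, 0 < lam m)
    (hlam0 : Tendsto lam atTop (nhds 0))
    (n : ℝ → ℕ) (hn : ∀ ε : ℝ, 0 < ε → n ε = sInf {m : ℕ | lam (m + 1) ≤ ε ^ 2})
    (hhyp : Tendsto (fun k : ℕ => Real.log (n (L ^ (-(k : ℝ)))) / (k : ℝ) ^ t)
      atTop (nhds 0)) :
    Tendsto (fun m : ℕ => Real.log (lam m)⁻¹ / (Real.log m) ^ ((1 : ℝ) / t))
      atTop atTop := by
  have hL0 : (0:ℝ) < L := lt_trans one_pos hL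
  have hlogL : 0 < Real.log L := Real.log_pos hL
  rw [tendsto_atTop]
  intro C
  set a : ℝ := max C 0 + 1 with ha_def
  have ha : 0 < a := by positivity
  have haC : C + 1 ≤ a := by
    have : C ≤ max C 0 := le_max_left _ _
    linarith
  set b : ℝ := 2 * Real.log L / a with hb_def
  have hb : 0 < b := by positivity
  set δ : ℝ := b ^ t with hδ_def
  have hδ : 0 < δ := Real.rpow_pos_of_pos hb t
  have hδb : δ ^ ((1:ℝ)/t) = b := by
    rw [hδ_def, ← Real.rpow_mul hb.le, mul_one_div_cancel ht.ne', Real.rpow_one]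
  -- eventual bound from hypothesis
  have hev : ∀ᶠ k : ℕ in atTop,
      Real.log (n (L ^ (-(k:ℝ)))) / (k:ℝ) ^ t < δ/2 :=
    hhyp.eventually (eventually_lt_nhds (by positivity))
  obtain ⟨K₀, hK₀⟩ := eventually_atTop.1 hev
  -- tendsto facts
  have hlogm : Tendsto (fun m : ℕ => Real.log m) atTop atTop :=
    Real.tendsto_log_atTop.comp tendsto_natCast_atTop_atTop
  have hx : Tendsto (fun m : ℕ => (Real.log m / δ) ^ ((1:ℝ)/t)) atTop atTop :=
    (tendsto_rpow_atTop (by positivity)).comp (hlogm.atTop_div_const hδ)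
  have hy : Tendsto (fun m : ℕ => (Real.log m) ^ ((1:ℝ)/t)) atTop atTop :=
    (tendsto_rpow_atTop (by positivity)).comp hlogm
  have h1 : ∀ᶠ m : ℕ in atTop,
      ((max K₀ 1 : ℕ) : ℝ) ≤ (Real.log m / δ) ^ ((1:ℝ)/t) := hx.eventually_ge_atTop _
  have h2 : ∀ᶠ m : ℕ in atTop, 2 * Real.log L ≤ (Real.log m) ^ ((1:ℝ)/t) :=
    hy.eventually_ge_atTop _
  filter_upwards [h1, h2, eventually_ge_atTop 2] with m hm1 hm2 hm3
  have hm1' : (1:ℕ) < m := hm3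
  have hlm : 0 < Real.log m := Real.log_pos (by exact_mod_cast hm1')
  set x : ℝ := (Real.log m / δ) ^ ((1:ℝ)/t) with hx_def
  have hx0 : 0 ≤ x := Real.rpow_nonneg (by positivity) _
  set k : ℕ := ⌊x⌋₊ with hk_def
  have hkx : (k:ℝ) ≤ x := Nat.floor_le hx0
  have hxk : x < k + 1 := Nat.lt_floor_add_one x
  have hkge : max K₀ 1 ≤ k := Nat.le_floor hm1
  have hk1 : 1 ≤ k := le_trans (le_max_right _ _) hkge
  have hkK : K₀ ≤ k := le_trans (le_max_left _ _) hkge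
  have hk0 : (0:ℝ) < (k:ℝ) := by exact_mod_cast hk1
  -- δ * k^t ≤ log m
  have hxt : x ^ t = Real.log m / δ := by
    rw [hx_def, ← Real.rpow_mul (by positivity), one_div_mul_cancel ht.ne', Real.rpow_one]
  have hkt0 : (0:ℝ) < (k:ℝ) ^ t := Real.rpow_pos_of_pos hk0 t
  have hktle : (k:ℝ) ^ t ≤ Real.log m / δ := by
    rw [← hxt]; exact Real.rpow_le_rpow (le_of_lt hk0) hkx ht.le
  have hδkt : δ * (k:ℝ) ^ t ≤ Real.log m := by
    rw [mul_comm]; exact (le_div_iff₀ hδ).mp hktle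
  -- the n value is < m
  set ε : ℝ := L ^ (-(k:ℝ)) with hε_def
  have hε0 : 0 < ε := Real.rpow_pos_of_pos hL0 _
  have hlogn : Real.log (n ε) < δ/2 * (k:ℝ) ^ t := by
    have := hK₀ k hkK
    rw [div_lt_iff₀ hkt0] at this
    exact this
  have hexplt : δ/2 * (k:ℝ) ^ t < Real.log m := by
    nlinarith
  have hnm : n ε < m := by
    rcases Nat.eq_zero_or_pos (n ε) with h0 | h0
    · omega
    · have h1 : (1:ℝ) ≤ (n ε : ℝ) := by exact_mod_cast h0
      have : (n ε : ℝ) < (m:ℝ) := by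
        calc (n ε : ℝ) = Real.exp (Real.log (n ε)) := (Real.exp_log (by linarith)).symm
          _ < Real.exp (Real.log m) := Real.exp_lt_exp.mpr (lt_trans hlogn hexplt)
          _ = (m:ℝ) := Real.exp_log (by positivity)
      exact_mod_cast this
  -- lam m ≤ ε^2
  have hset : {j : ℕ | lam (j + 1) ≤ ε ^ 2}.Nonempty := by
    obtain ⟨j, hj⟩ := (hlam0.eventually (eventually_lt_nhds (by positivity : (0:ℝ) < ε^2))).exists
    exact ⟨j, le_of_lt (lt_of_le_of_lt (hanti (Nat.le_succ j)) hj)⟩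
  have hlamm : lam m ≤ ε ^ 2 := by
    have hmem : lam (n ε + 1) ≤ ε ^ 2 := by
      have := Nat.sInf_mem hset
      rw [← hn ε hε0] at this
      exact this
    exact le_trans (hanti (by omega : n ε + 1 ≤ m)) hmem
  -- log (lam m)⁻¹ ≥ 2 k log L
  have hlogε : Real.log ε = -(k:ℝ) * Real.log L := Real.log_rpow hL0 _
  have hloglam : 2 * (k:ℝ) * Real.log L ≤ Real.log (lam m)⁻¹ := by
    have h1 : Real.log (lam m) ≤ Real.log (ε ^ 2) :=
      Real.log_le_log (hpos m) hlamm
    rw [Real.log_pow] at h1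
    rw [Real.log_inv]
    push_cast at h1
    nlinarith
  -- arithmetic conclusion
  set y : ℝ := (Real.log m) ^ ((1:ℝ)/t) with hy_def
  have hy0 : 0 < y := Real.rpow_pos_of_pos hlm _
  have hxy : x = y / b := by
    rw [hx_def, hy_def, Real.div_rpow hlm.le hδ.le, hδb]
  have h2Lx : 2 * Real.log L * x = a * y := by
    rw [hxy, hb_def]
    field_simp
  clear_value a b δ x k ε y
  rw [le_div_iff₀ hy0]
  have hky : x - 1 ≤ (k:ℝ) := by linarith
  have h5 : 2 * Real.log L * (x - 1) ≤ 2 * Real.log L * (k:ℝ) :=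
    mul_le_mul_of_nonneg_left hky (by positivity)
  have hchain : a * y - 2 * Real.log L ≤ Real.log (lam m)⁻¹ := by
    have h6 : 2 * Real.log L * (k:ℝ) = 2 * (k:ℝ) * Real.log L := by ring
    have h7 : 2 * Real.log L * (x - 1) = 2 * Real.log L * x - 2 * Real.log L := by ring
    linarith
  have hCa : 1 * y ≤ (a - C) * y := by
    apply mul_le_mul_of_nonneg_right _ hy0.le
    linarith
  have hsplit : C * y + (a - C) * y = a * y := by ring
  linarith
end

section
/- Let L > 1, t > 0, and let (λ_n)_{n∈ℕ} be a non-increasing sequence of positive reals tending to 0, and define n(ε) := min{ n ∈ ℕ₀ : λ_{n+1} ≤ ε² }. If lim_{n→∞} (ln λ_n^{-1}) / (ln n)^{1/t} = ∞, then lim_{k→∞} (ln n(L^{-k})) / k^t = 0. -/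
open Filter Topology Real

/-- If `ln λ_n^{-1} / (ln n)^{1/t} → ∞`, then `ln n(L^{-k}) / k^t → 0`. -/
theorem stmt6 (L : ℝ) (hL : 1 < L) (t : ℝ) (ht : 0 < t)
    (lam : ℕ → ℝ) (hanti : Antitone lam) (hpos : ∀ m, 0 < lam m)
    (hlam0 : Tendsto lam atTop (nhds 0))
    (n : ℝ → ℕ) (hn : ∀ ε : ℝ, 0 < ε → n ε = sInf {m : ℕ | lam (m + 1) ≤ ε ^ 2})
    (hhyp : Tendsto (fun m : ℕ => Real.log (lam m)⁻¹ / (Real.log m) ^ ((1 : ℝ) / t))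
      atTop atTop) :
    Tendsto (fun k : ℕ => Real.log (n (L ^ (-(k : ℝ)))) / (k : ℝ) ^ t)
      atTop (nhds 0) := by
  have hL0 : (0:ℝ) < L := lt_trans one_pos hL
  have hc : 0 < Real.log L := Real.log_pos hL
  rw [Metric.tendsto_atTop]
  intro δ hδ
  have hδt : (0:ℝ) < δ ^ ((1:ℝ)/t) := Real.rpow_pos_of_pos hδ _
  set C : ℝ := 2 * Real.log L / δ ^ ((1:ℝ)/t) with hCdef
  have hCpos : 0 < C := by positivity
  obtain ⟨M0, hM0⟩ := eventually_atTop.1 (tendsto_atTop.1 hhyp C)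
  set M1 : ℕ := max M0 2 with hM1def
  -- eventually δ * k^t > log M1
  have hkt : Tendsto (fun k : ℕ => (k:ℝ) ^ t) atTop atTop :=
    (tendsto_rpow_atTop ht).comp tendsto_natCast_atTop_atTop
  have hev : ∀ᶠ k : ℕ in atTop, Real.log M1 / δ < (k:ℝ) ^ t :=
    hkt.eventually_gt_atTop _
  rw [← Filter.eventually_atTop]
  filter_upwards [hev, eventually_ge_atTop 1] with k hk1 hk2
  have hkR : (1:ℝ) ≤ (k:ℝ) := by exact_mod_cast hk2
  have hktpos : (0:ℝ) < (k:ℝ) ^ t := Real.rpow_pos_of_pos (lt_of_lt_of_le one_pos hkR) _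
  set ε : ℝ := L ^ (-(k:ℝ)) with hεdef
  have hεpos : 0 < ε := Real.rpow_pos_of_pos hL0 _
  set m : ℕ := n ε with hmdef
  have hmS : m = sInf {m : ℕ | lam (m + 1) ≤ ε ^ 2} := hn ε hεpos
  have hSne : {m : ℕ | lam (m + 1) ≤ ε ^ 2}.Nonempty := by
    have : ∀ᶠ j : ℕ in atTop, lam j < ε ^ 2 :=
      hlam0.eventually (gt_mem_nhds (by positivity))
    obtain ⟨M, hM⟩ := eventually_atTop.1 this
    exact ⟨M, le_of_lt (hM (M + 1) (by omega))⟩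
  -- upper bound on log m
  have hlogm : Real.log m < δ * (k:ℝ) ^ t := by
    by_cases hcase : m < M1
    · calc Real.log m ≤ Real.log M1 := by
            rcases Nat.eq_zero_or_pos m with h | h
            · have h2 : (2:ℕ) ≤ M1 := le_max_right _ _
              simp only [h, Nat.cast_zero, Real.log_zero]
              exact Real.log_nonneg (by exact_mod_cast le_trans one_le_two h2)
            · exact Real.log_le_log (by exact_mod_cast h) (by exact_mod_cast hcase.le)
          _ < δ * (k:ℝ) ^ t := (div_lt_iff₀' hδ).1 hk1
    · push_neg at hcase
      have hm2 : 2 ≤ m := le_trans (le_max_right _ _) hcase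
      have hmM0 : M0 ≤ m := le_trans (le_max_left _ _) hcase
      -- minimality : lam m > ε^2
      have hmin : ε ^ 2 < lam m := by
        have hnot : m - 1 ∉ {m : ℕ | lam (m + 1) ≤ ε ^ 2} := by
          rw [hmS] at *
          exact Nat.notMem_of_lt_sInf (by omega)
        have : ¬ lam (m - 1 + 1) ≤ ε ^ 2 := hnot
        rw [Nat.sub_add_cancel (by omega)] at this
        exact lt_of_not_ge this
      -- so log (lam m)⁻¹ < 2 k log L
      have hεlog : Real.log (ε ^ 2) = -(2 * (k:ℝ) * Real.log L) := by
        rw [hεdef, Real.log_pow, Real.log_rpow hL0]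
        push_cast; ring
      have hlam_ub : Real.log (lam m)⁻¹ < 2 * (k:ℝ) * Real.log L := by
        rw [Real.log_inv]
        have := Real.log_lt_log (by positivity) hmin
        rw [hεlog] at this
        linarith
      -- hypothesis bound
      have hlogm0 : (0:ℝ) ≤ Real.log m := Real.log_nonneg (by exact_mod_cast le_trans (by norm_num) hm2)
      have hlogmpos : (0:ℝ) < (Real.log m) ^ ((1:ℝ)/t) ∨ Real.log m = 0 := by
        rcases eq_or_lt_of_le hlogm0 with h | h
        · exact Or.inr h.symm
        · exact Or.inl (Real.rpow_pos_of_pos h _)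
      rcases hlogmpos with hlp | hlz
      · have hhb := hM0 m hmM0
        have h1 : C * (Real.log m) ^ ((1:ℝ)/t) ≤ Real.log (lam m)⁻¹ :=
          (le_div_iff₀ hlp).1 hhb
        have h2 : C * (Real.log m) ^ ((1:ℝ)/t) < 2 * (k:ℝ) * Real.log L :=
          lt_of_le_of_lt h1 hlam_ub
        have h3 : (Real.log m) ^ ((1:ℝ)/t) < δ ^ ((1:ℝ)/t) * (k:ℝ) := by
          rw [hCdef] at h2
          rw [div_mul_eq_mul_div, div_lt_iff₀ hδt] at h2
          nlinarith [hδt, hc]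
        have e1 : ((Real.log m) ^ ((1:ℝ)/t)) ^ t = Real.log m := by
          rw [← Real.rpow_mul hlogm0, one_div_mul_cancel ht.ne', Real.rpow_one]
        have e2 : (δ ^ ((1:ℝ)/t) * (k:ℝ)) ^ t = δ * (k:ℝ) ^ t := by
          rw [Real.mul_rpow hδt.le (by positivity), ← Real.rpow_mul hδ.le,
            one_div_mul_cancel ht.ne', Real.rpow_one]
        calc Real.log m = ((Real.log m) ^ ((1:ℝ)/t)) ^ t := e1.symm
          _ < (δ ^ ((1:ℝ)/t) * (k:ℝ)) ^ t := Real.rpow_lt_rpow (Real.rpow_nonneg hlogm0 _) h3 ht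
          _ = δ * (k:ℝ) ^ t := e2
      · rw [hlz]; positivity
  have hlogm0 : (0:ℝ) ≤ Real.log m := by
    rcases Nat.eq_zero_or_pos m with h | h
    · simp [h]
    · exact Real.log_nonneg (by exact_mod_cast h)
  rw [Real.dist_eq, sub_zero, abs_of_nonneg (by positivity)]
  rw [div_lt_iff₀ hktpos]
  exact hlogm
end

section
/- Let (N(ε,d))_{ε∈(0,1], d∈ℕ} be a family of positive integers satisfying ln N(ε,d) ≤ min{ε^{-1/α}, d} · ln(2(ε^{-1/α} + d)) for a fixed α > 0. If s > 1/α and t > 0, then for every sequence (ε_k, d_k) with ε_k^{-1} + d_k → ∞ one has (ln N(ε_k, d_k)) / (ε_k^{-s} + d_k^t) → 0. -/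
open Filter Topology Real

private lemma aux_tendsto (c : ℝ) (hc : c < 0) :
    Tendsto (fun m : ℝ => (Real.log 4 + Real.log m) * m ^ c) atTop (nhds 0) := by
  have h1 : Tendsto (fun m : ℝ => Real.log 4 * m ^ c) atTop (nhds 0) := by
    have := (tendsto_rpow_neg_atTop (y := -c) (by linarith)).const_mul (Real.log 4)
    simpa using this
  have h2 : Tendsto (fun m : ℝ => Real.log m * m ^ c) atTop (nhds 0) := by
    have hlo := (isLittleO_log_rpow_atTop (r := -c) (by linarith)).tendsto_div_nhds_zero
    refine hlo.congr' ?_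
    filter_upwards [eventually_gt_atTop (0 : ℝ)] with m hm
    rw [Real.rpow_neg hm.le, div_eq_mul_inv, inv_inv]
  have := h1.add h2
  simpa [add_mul] using this

/-- If `ln N(ε,d) ≤ min{ε^{-1/α}, d} · ln(2(ε^{-1/α}+d))` then for `s > 1/α`, `t > 0`
the quotient `ln N(ε_k,d_k) / (ε_k^{-s} + d_k^t)` tends to `0` whenever
`ε_k⁻¹ + d_k → ∞`. -/
theorem stmt10 (α : ℝ) (hα : 0 < α) (N : ℝ → ℕ → ℕ) (hNpos : ∀ ε d, 0 < N ε d)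
    (hN : ∀ ε : ℝ, 0 < ε → ε ≤ 1 → ∀ d : ℕ, 1 ≤ d →
      Real.log (N ε d) ≤
        min (ε ^ (-(1 / α))) (d : ℝ) * Real.log (2 * (ε ^ (-(1 / α)) + (d : ℝ))))
    (s t : ℝ) (hs : 1 / α < s) (ht : 0 < t)
    (ε : ℕ → ℝ) (d : ℕ → ℕ) (hε : ∀ k, ε k ∈ Set.Ioc (0 : ℝ) 1) (hd : ∀ k, 1 ≤ d k)
    (hto : Tendsto (fun k => (ε k)⁻¹ + (d k : ℝ)) atTop atTop) :
    Tendsto (fun k => Real.log (N (ε k) (d k)) / ((ε k) ^ (-s) + (d k : ℝ) ^ t))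
      atTop (nhds 0) := by
  have hεpos : ∀ k, 0 < ε k := fun k => (hε k).1
  set σ : ℝ := α * s with hσdef
  have hσ : 1 < σ := by
    have := (div_lt_iff₀ hα).mp (by rwa [one_div] at hs)
    simpa [hσdef, mul_comm] using this
  have hexp : -(1 / α) ≤ 0 := by
    have : 0 < 1 / α := by positivity
    linarith
  -- x k = ε k ^ (-(1/α)) ≥ 1
  have hx1 : ∀ k, 1 ≤ (ε k) ^ (-(1 / α)) := fun k =>
    Real.one_le_rpow_of_pos_of_le_one_of_nonpos (hεpos k) (hε k).2 hexp
  have hd1 : ∀ k, (1 : ℝ) ≤ (d k : ℝ) := fun k => by exact_mod_cast hd k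
  -- ε k ^ (-s) = (x k) ^ σ
  have hxσ : ∀ k, (ε k) ^ (-s) = ((ε k) ^ (-(1 / α))) ^ σ := by
    intro k
    rw [← Real.rpow_mul (hεpos k).le]
    congr 1
    field_simp [hσdef]
    ring
  -- the dominating function
  set g : ℝ → ℝ := fun m =>
    (Real.log 4 + Real.log m) * m ^ (1 - σ) +
      (Real.log 4 + Real.log m) * m ^ (-(t / 2)) +
      (Real.log 4 + Real.log m) * m ^ ((t / 2) * (1 - σ)) with hgdef
  -- pointwise bound
  have key : ∀ k, Real.log (N (ε k) (d k)) / ((ε k) ^ (-s) + (d k : ℝ) ^ t) ≤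
      g (max ((ε k) ^ (-(1 / α))) (d k : ℝ)) := by
    intro k
    set X : ℝ := (ε k) ^ (-(1 / α)) with hXdef
    set D : ℝ := (d k : ℝ) with hDdef
    set M : ℝ := max X D with hMdef
    have hX1 : 1 ≤ X := hx1 k
    have hD1 : 1 ≤ D := hd1 k
    have hX0 : 0 < X := lt_of_lt_of_le one_pos hX1
    have hD0 : 0 < D := lt_of_lt_of_le one_pos hD1
    have hM1 : 1 ≤ M := le_trans hX1 (le_max_left _ _)
    have hM0 : 0 < M := lt_of_lt_of_le one_pos hM1
    have hC0 : 0 ≤ Real.log 4 + Real.log M := by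
      have := Real.log_nonneg (by norm_num : (1:ℝ) ≤ 4)
      have := Real.log_nonneg hM1
      linarith
    set C : ℝ := Real.log 4 + Real.log M with hCdef
    have hDen : (ε k) ^ (-s) + D ^ t = X ^ σ + D ^ t := by rw [hxσ k]
    have hXσ0 : 0 < X ^ σ := Real.rpow_pos_of_pos hX0 σ
    have hDt0 : 0 < D ^ t := Real.rpow_pos_of_pos hD0 t
    have hDenpos : 0 < X ^ σ + D ^ t := by positivity
    -- numerator bound
    have hlog : Real.log (2 * (X + D)) ≤ C := by
      have h4M : 2 * (X + D) ≤ 4 * M := by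
        have := le_max_left X D
        have := le_max_right X D
        linarith
      calc Real.log (2 * (X + D)) ≤ Real.log (4 * M) :=
            Real.log_le_log (by positivity) h4M
        _ = C := by rw [Real.log_mul (by norm_num) (ne_of_gt hM0), hCdef]
    have hmin0 : 0 ≤ min X D := le_min hX0.le hD0.le
    have hL : Real.log (N (ε k) (d k)) ≤ min X D * C := by
      calc Real.log (N (ε k) (d k)) ≤ min X D * Real.log (2 * (X + D)) :=
            hN (ε k) (hεpos k) (hε k).2 (d k) (hd k)
        _ ≤ min X D * C := mul_le_mul_of_nonneg_left hlog hmin0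
    -- nonnegativity of the three terms
    have ha0 : 0 ≤ C * M ^ (1 - σ) := by positivity
    have hb0 : 0 ≤ C * M ^ (-(t / 2)) := by positivity
    have hc0 : 0 ≤ C * M ^ ((t / 2) * (1 - σ)) := by positivity
    have hgM : g M = C * M ^ (1 - σ) + C * M ^ (-(t / 2)) + C * M ^ ((t / 2) * (1 - σ)) := by
      simp [hgdef, hCdef]
    rw [hDen, hgM]
    rcases le_total D X with hDX | hXD
    · -- M = X, min = D
      have hMX : M = X := max_eq_left hDX
      have h1 : Real.log (N (ε k) (d k)) / (X ^ σ + D ^ t) ≤ (X * C) / X ^ σ := by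
        have hnum : Real.log (N (ε k) (d k)) ≤ X * C := by
          calc Real.log (N (ε k) (d k)) ≤ min X D * C := hL
            _ ≤ X * C := mul_le_mul_of_nonneg_right (min_le_left _ _) hC0
        exact div_le_div₀ (by positivity) hnum hXσ0 (by linarith)
      have h2 : (X * C) / X ^ σ = C * X ^ (1 - σ) := by
        rw [Real.rpow_sub hX0, Real.rpow_one]
        field_simp
      have := h1.trans_eq h2
      rw [hMX]
      have hb0' : 0 ≤ C * X ^ (-(t / 2)) := mul_nonneg hC0 (Real.rpow_nonneg hX0.le _)
      have hc0' : 0 ≤ C * X ^ ((t / 2) * (1 - σ)) := mul_nonneg hC0 (Real.rpow_nonneg hX0.le _)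
      exact this.trans ((le_add_of_nonneg_right hb0').trans (le_add_of_nonneg_right hc0'))
    · -- M = D, min = X
      have hMD : M = D := max_eq_right hXD
      rcases le_total X (D ^ (t / 2)) with hXsmall | hXbig
      · have h1 : Real.log (N (ε k) (d k)) / (X ^ σ + D ^ t) ≤ (D ^ (t / 2) * C) / D ^ t := by
          have hnum : Real.log (N (ε k) (d k)) ≤ D ^ (t / 2) * C := by
            calc Real.log (N (ε k) (d k)) ≤ min X D * C := hL
              _ ≤ X * C := mul_le_mul_of_nonneg_right (min_le_left _ _) hC0
              _ ≤ D ^ (t / 2) * C := mul_le_mul_of_nonneg_right hXsmall hC0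
          exact div_le_div₀ (by positivity) hnum hDt0 (by linarith)
        have h2 : (D ^ (t / 2) * C) / D ^ t = C * D ^ (-(t / 2)) := by
          have : (-(t / 2) : ℝ) = t / 2 - t := by ring
          rw [this, Real.rpow_sub hD0]
          field_simp
        have := h1.trans_eq h2
        rw [hMD]
        have ha0' : 0 ≤ C * D ^ (1 - σ) := mul_nonneg hC0 (Real.rpow_nonneg hD0.le _)
        have hc0' : 0 ≤ C * D ^ ((t / 2) * (1 - σ)) := mul_nonneg hC0 (Real.rpow_nonneg hD0.le _)
        exact this.trans ((le_add_of_nonneg_left ha0').trans (le_add_of_nonneg_right hc0'))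
      · have h1 : Real.log (N (ε k) (d k)) / (X ^ σ + D ^ t) ≤ (X * C) / X ^ σ := by
          have hnum : Real.log (N (ε k) (d k)) ≤ X * C := by
            calc Real.log (N (ε k) (d k)) ≤ min X D * C := hL
              _ ≤ X * C := mul_le_mul_of_nonneg_right (min_le_left _ _) hC0
          exact div_le_div₀ (by positivity) hnum hXσ0 (by linarith)
        have h2 : (X * C) / X ^ σ = C * X ^ (1 - σ) := by
          rw [Real.rpow_sub hX0, Real.rpow_one]
          field_simp
        have h3 : C * X ^ (1 - σ) ≤ C * D ^ ((t / 2) * (1 - σ)) := by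
          have hDt2 : 0 < D ^ (t / 2) := Real.rpow_pos_of_pos hD0 _
          have : X ^ (1 - σ) ≤ (D ^ (t / 2)) ^ (1 - σ) :=
            Real.rpow_le_rpow_of_nonpos hDt2 hXbig (by linarith)
          rw [← Real.rpow_mul hD0.le] at this
          exact mul_le_mul_of_nonneg_left this hC0
        have := (h1.trans_eq h2).trans h3
        rw [hMD]
        have ha0' : 0 ≤ C * D ^ (1 - σ) := mul_nonneg hC0 (Real.rpow_nonneg hD0.le _)
        have hb0' : 0 ≤ C * D ^ (-(t / 2)) := mul_nonneg hC0 (Real.rpow_nonneg hD0.le _)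
        exact this.trans (le_add_of_nonneg_left (add_nonneg ha0' hb0'))
  -- max tends to infinity
  have hmax : Tendsto (fun k => max ((ε k) ^ (-(1 / α))) (d k : ℝ)) atTop atTop := by
    rw [tendsto_atTop]
    intro b
    set B : ℝ := max b 1 with hBdef
    have hB1 : 1 ≤ B := le_max_right _ _
    have hB0 : 0 < B := lt_of_lt_of_le one_pos hB1
    have hev := hto.eventually_ge_atTop (B ^ α + B)
    filter_upwards [hev] with k hk
    have hbB : b ≤ B := le_max_left _ _
    have hεinv : (ε k)⁻¹ = ((ε k) ^ (-(1 / α))) ^ α := by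
      rw [← Real.rpow_mul (hεpos k).le]
      have : -(1 / α) * α = -1 := by field_simp
      rw [this, Real.rpow_neg_one]
    by_contra hcon
    push_neg at hcon
    have hMb : max ((ε k) ^ (-(1 / α))) (d k : ℝ) < B := lt_of_lt_of_le hcon hbB
    have hxB : (ε k) ^ (-(1 / α)) < B := lt_of_le_of_lt (le_max_left _ _) hMb
    have hdB : (d k : ℝ) < B := lt_of_le_of_lt (le_max_right _ _) hMb
    have hxαB : ((ε k) ^ (-(1 / α))) ^ α < B ^ α := by
      apply Real.rpow_lt_rpow (Real.rpow_nonneg (hεpos k).le _) hxB hα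
    rw [hεinv] at hk
    linarith
  -- g tends to 0 at infinity
  have hg : Tendsto g atTop (nhds 0) := by
    have h1 := aux_tendsto (1 - σ) (by linarith)
    have h2 := aux_tendsto (-(t / 2)) (by linarith)
    have h3 := aux_tendsto ((t / 2) * (1 - σ)) (mul_neg_of_pos_of_neg (by linarith) (by linarith))
    have := (h1.add h2).add h3
    simpa [hgdef] using this
  have hcomp : Tendsto (fun k => g (max ((ε k) ^ (-(1 / α))) (d k : ℝ))) atTop (nhds 0) :=
    hg.comp hmax
  refine squeeze_zero (fun k => ?_) key hcomp
  have hL0 : 0 ≤ Real.log (N (ε k) (d k)) :=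
    Real.log_nonneg (by exact_mod_cast hNpos (ε k) (d k))
  have : 0 < (ε k) ^ (-s) + (d k : ℝ) ^ t := by
    have h1 : 0 < (ε k) ^ (-s) := Real.rpow_pos_of_pos (hεpos k) _
    have h2 : 0 < (d k : ℝ) ^ t := Real.rpow_pos_of_pos (lt_of_lt_of_le one_pos (hd1 k)) _
    linarith
  exact div_nonneg hL0 this.le
end

section
/- Let (N(ε,d)) be a family of positive integers satisfying ln N(ε,d) ≤ min{ε^{-1/α}, d} · ln(2(ε^{-1/α} + d)) for a fixed α > 0. If t > 1 and s > 0, then (ln N(ε_k, d_k)) / (ε_k^{-s} + d_k^t) → 0 whenever ε_k^{-1} + d_k → ∞. -/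
open Filter Topology Real

/-!
Put `u = ε^{-1/α}`, so that `ε^{-s} = u^{αs}`, and `S = ε^{-s} + d^t`. Since `u, d ≥ 1` we have
`2(u + d) ≤ 4ud`, hence `ln N ≤ d · ln(2(u + d)) ≤ S^{1/t} (ln 4 + (1/(αs) + 1/t) ln S)`.
Dividing by `S` leaves `O(S^{1/t - 1} ln S)`, which tends to `0` because `t > 1`
and `S ≥ ((ε⁻¹ + d)/2)^{min(s,t)} → ∞`.
-/

lemma log_le_log_div_of_rpow_le {x y p : ℝ} (hx : 0 < x) (hp : 0 < p) (h : x ^ p ≤ y) :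
    log x ≤ log y / p := by
  rw [le_div_iff₀ hp, mul_comm, ← log_rpow hx]
  exact log_le_log (rpow_pos_of_pos hx p) h

lemma log_two_mul_add_le {u v : ℝ} (hu : 1 ≤ u) (hv : 1 ≤ v) :
    log (2 * (u + v)) ≤ log 4 + log u + log v := by
  have hu0 : 0 < u := by linarith
  have hv0 : 0 < v := by linarith
  rw [← log_mul (by norm_num) hu0.ne', ← log_mul (by positivity) hv0.ne']
  exact log_le_log (by positivity) (by nlinarith)

lemma tendsto_rpow_add_rpow_atTop {ι : Type*} {l : Filter ι} {x y : ι → ℝ} {s t : ℝ}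
    (hx : ∀ i, 1 ≤ x i) (hy : ∀ i, 1 ≤ y i) (hs : 0 < s) (ht : 0 < t)
    (h : Tendsto (fun i => x i + y i) l atTop) :
    Tendsto (fun i => x i ^ s + y i ^ t) l atTop := by
  have hmean : Tendsto (fun i => ((x i + y i) / 2) ^ min s t) l atTop :=
    (tendsto_rpow_atTop (lt_min hs ht)).comp (h.atTop_div_const two_pos)
  refine tendsto_atTop_mono (fun i => ?_) hmean
  have hxs : 0 ≤ x i ^ s := rpow_nonneg (by linarith [hx i]) s
  have hyt : 0 ≤ y i ^ t := rpow_nonneg (by linarith [hy i]) t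
  rcases le_total (x i) (y i) with hxy | hyx
  · calc ((x i + y i) / 2) ^ min s t ≤ y i ^ min s t :=
          rpow_le_rpow (by linarith [hx i, hy i]) (by linarith) (le_min hs.le ht.le)
      _ ≤ y i ^ t := rpow_le_rpow_of_exponent_le (hy i) (min_le_right s t)
      _ ≤ x i ^ s + y i ^ t := le_add_of_nonneg_left hxs
  · calc ((x i + y i) / 2) ^ min s t ≤ x i ^ min s t :=
          rpow_le_rpow (by linarith [hx i, hy i]) (by linarith) (le_min hs.le ht.le)
      _ ≤ x i ^ s := rpow_le_rpow_of_exponent_le (hx i) (min_le_left s t)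
      _ ≤ x i ^ s + y i ^ t := le_add_of_nonneg_right hyt

lemma tendsto_const_add_mul_log_mul_rpow_neg_atTop {r : ℝ} (hr : 0 < r) (a c : ℝ) :
    Tendsto (fun x => (a + c * log x) * x ^ (-r)) atTop (𝓝 0) := by
  have hlog : Tendsto (fun x => log x * x ^ (-r)) atTop (𝓝 0) :=
    (isLittleO_log_rpow_atTop hr).tendsto_div_nhds_zero.congr' <|
      (eventually_ge_atTop 0).mono fun x hx => by simp only [rpow_neg hx, div_eq_mul_inv]
  simpa [add_mul, mul_assoc] using
    ((tendsto_rpow_neg_atTop hr).const_mul a).add (hlog.const_mul c)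

lemma div_rpow_add_rpow_le_of_le_min_mul_log {α s t ε D L : ℝ} (hα : 0 < α) (hs : 0 < s)
    (ht : 0 < t) (hε₀ : 0 < ε) (hε₁ : ε ≤ 1) (hD : 1 ≤ D)
    (hL : L ≤ min (ε ^ (-(1 / α))) D * log (2 * (ε ^ (-(1 / α)) + D))) :
    L / (ε ^ (-s) + D ^ t) ≤
      (log 4 + (1 / (α * s) + 1 / t) * log (ε ^ (-s) + D ^ t)) *
        (ε ^ (-s) + D ^ t) ^ (-(1 - 1 / t)) := by
  set u := ε ^ (-(1 / α))
  set S := ε ^ (-s) + D ^ t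
  have hu : 1 ≤ u :=
    one_le_rpow_of_pos_of_le_one_of_nonpos hε₀ hε₁ (neg_nonpos.2 (by positivity))
  have hεs : 1 ≤ ε ^ (-s) := one_le_rpow_of_pos_of_le_one_of_nonpos hε₀ hε₁ (by linarith)
  have hDt : 1 ≤ D ^ t := one_le_rpow hD ht.le
  have hS : 0 < S := by positivity
  have hu_pow : u ^ (α * s) ≤ S := by
    rw [← rpow_mul hε₀.le, show -(1 / α) * (α * s) = -s by field_simp]
    linarith
  have hD_pow : D ≤ S ^ (1 / t) := by
    calc D = (D ^ t) ^ (1 / t) := by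
          rw [← rpow_mul (by linarith), mul_one_div_cancel ht.ne', rpow_one]
      _ ≤ S ^ (1 / t) := rpow_le_rpow (by linarith) (by linarith) (by positivity)
  have hlog : log (2 * (u + D)) ≤ log 4 + (1 / (α * s) + 1 / t) * log S := by
    have hlog_u := log_le_log_div_of_rpow_le (by linarith) (by positivity) hu_pow
    have hlog_D := log_le_log_div_of_rpow_le (by linarith) ht (le_refl (D ^ t))
    have hlog_Dt : log (D ^ t) ≤ log S := log_le_log (by linarith) (by linarith)
    have := div_le_div_of_nonneg_right hlog_Dt ht.le
    have hsplit : (1 / (α * s) + 1 / t) * log S = log S / (α * s) + log S / t := by ring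
    linarith [log_two_mul_add_le hu hD]
  rw [div_le_iff₀ hS]
  calc L ≤ D * log (2 * (u + D)) :=
        hL.trans (mul_le_mul_of_nonneg_right (min_le_right _ _) (log_nonneg (by linarith)))
    _ ≤ S ^ (1 / t) * (log 4 + (1 / (α * s) + 1 / t) * log S) :=
        mul_le_mul hD_pow hlog (log_nonneg (by linarith)) (by positivity)
    _ = _ := by rw [mul_assoc, ← rpow_add_one hS.ne', neg_sub, sub_add_cancel, mul_comm]

theorem stmt11_general (α : ℝ) (hα : 0 < α) (N : ℝ → ℕ → ℕ)
    (hN : ∀ ε : ℝ, 0 < ε → ε ≤ 1 → ∀ d : ℕ, 1 ≤ d →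
      Real.log (N ε d) ≤
        min (ε ^ (-(1 / α))) (d : ℝ) * Real.log (2 * (ε ^ (-(1 / α)) + (d : ℝ))))
    (s t : ℝ) (hs : 0 < s) (ht : 1 < t)
    (ε : ℕ → ℝ) (d : ℕ → ℕ) (hε : ∀ k, ε k ∈ Set.Ioc (0 : ℝ) 1) (hd : ∀ k, 1 ≤ d k)
    (hto : Tendsto (fun k => (ε k)⁻¹ + (d k : ℝ)) atTop atTop) :
    Tendsto (fun k => Real.log (N (ε k) (d k)) / ((ε k) ^ (-s) + (d k : ℝ) ^ t))
      atTop (nhds 0) := by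
  have hS : Tendsto (fun k => ε k ^ (-s) + (d k : ℝ) ^ t) atTop atTop := by
    refine (tendsto_rpow_add_rpow_atTop (x := fun k => (ε k)⁻¹) (y := fun k => (d k : ℝ))
      (fun k => one_le_inv_iff₀.2 (hε k)) (fun k => by exact_mod_cast hd k) hs
      (by linarith) hto).congr fun k => ?_
    rw [inv_rpow (hε k).1.le, rpow_neg (hε k).1.le]
  refine squeeze_zero
    (fun k => div_nonneg (log_natCast_nonneg _)
      (add_nonneg (rpow_nonneg (hε k).1.le _) (rpow_nonneg (Nat.cast_nonneg _) _)))
    (fun k => div_rpow_add_rpow_le_of_le_min_mul_log hα hs (by linarith) (hε k).1 (hε k).2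
      (by exact_mod_cast hd k) (hN _ (hε k).1 (hε k).2 _ (hd k))) ?_
  have h1t : 0 < 1 - 1 / t := by
    rw [sub_pos, div_lt_one (by linarith)]
    exact ht
  exact (tendsto_const_add_mul_log_mul_rpow_neg_atTop h1t _ _).comp hS

/-- If `ln N(ε,d) ≤ min{ε^{-1/α}, d} · ln(2(ε^{-1/α}+d))` then for `t > 1`, `s > 0`
the quotient `ln N(ε_k,d_k) / (ε_k^{-s} + d_k^t)` tends to `0` whenever
`ε_k⁻¹ + d_k → ∞`. -/
theorem stmt11 (α : ℝ) (hα : 0 < α) (N : ℝ → ℕ → ℕ) (hNpos : ∀ ε d, 0 < N ε d)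
    (hN : ∀ ε : ℝ, 0 < ε → ε ≤ 1 → ∀ d : ℕ, 1 ≤ d →
      Real.log (N ε d) ≤
        min (ε ^ (-(1 / α))) (d : ℝ) * Real.log (2 * (ε ^ (-(1 / α)) + (d : ℝ))))
    (s t : ℝ) (hs : 0 < s) (ht : 1 < t)
    (ε : ℕ → ℝ) (d : ℕ → ℕ) (hε : ∀ k, ε k ∈ Set.Ioc (0 : ℝ) 1) (hd : ∀ k, 1 ≤ d k)
    (hto : Tendsto (fun k => (ε k)⁻¹ + (d k : ℝ)) atTop atTop) :
    Tendsto (fun k => Real.log (N (ε k) (d k)) / ((ε k) ^ (-s) + (d k : ℝ) ^ t))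
      atTop (nhds 0) :=
  stmt11_general α hα N hN s t hs ht ε d hε hd hto
end

section
/- Suppose (n_d)_{d∈ℕ} is a sequence of positive reals with n_d ≥ 11^d for all d ≥ 2, and let ε_d := (44^α e^α d^{α/2})^{-1} for a fixed α > 0. If 0 < s ≤ 2/α and 0 < t ≤ 1, then the quotient (ln n_d) / (ε_d^{-s} + d^t) does not converge to 0 as d → ∞; in fact it is bounded below by a positive constant for large d. -/
open Filter Topology Real

/-- With `n_d ≥ 11^d` and `ε_d = (44^α e^α d^{α/2})⁻¹`, if `0 < s ≤ 2/α` and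
`0 < t ≤ 1` then `ln n_d / (ε_d^{-s} + d^t)` is bounded below by a positive constant
for large `d`, and in particular does not tend to `0`. -/
theorem stmt12 (α : ℝ) (hα : 0 < α) (n : ℕ → ℝ) (hnpos : ∀ d, 0 < n d)
    (hn : ∀ d : ℕ, 2 ≤ d → (11 : ℝ) ^ d ≤ n d)
    (ε : ℕ → ℝ)
    (hε : ∀ d : ℕ, ε d = ((44 : ℝ) ^ α * (Real.exp 1) ^ α * (d : ℝ) ^ (α / 2))⁻¹)
    (s t : ℝ) (hs : 0 < s) (hs' : s ≤ 2 / α) (ht : 0 < t) (ht' : t ≤ 1) :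
    (∃ c : ℝ, 0 < c ∧ ∀ᶠ d : ℕ in atTop,
        c ≤ Real.log (n d) / ((ε d) ^ (-s) + (d : ℝ) ^ t)) ∧
      ¬ Tendsto (fun d : ℕ => Real.log (n d) / ((ε d) ^ (-s) + (d : ℝ) ^ t))
          atTop (nhds 0) := by
  have h44 : (0:ℝ) < (44:ℝ) ^ α := Real.rpow_pos_of_pos (by norm_num) α
  have hexp : (0:ℝ) < (Real.exp 1) ^ α := Real.rpow_pos_of_pos (Real.exp_pos 1) α
  set K : ℝ := ((44:ℝ) ^ α * (Real.exp 1) ^ α) ^ s with hK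
  have hKpos : 0 < K := Real.rpow_pos_of_pos (mul_pos h44 hexp) s
  have hlog11 : (0:ℝ) < Real.log 11 := Real.log_pos (by norm_num)
  set c : ℝ := Real.log 11 / (K + 1) with hc
  have hcpos : 0 < c := div_pos hlog11 (by linarith)
  have hαs : (α / 2) * s ≤ 1 := by
    have : s * α ≤ 2 := (le_div_iff₀ hα).mp hs'
    nlinarith
  have key : ∀ᶠ d : ℕ in atTop,
      c ≤ Real.log (n d) / ((ε d) ^ (-s) + (d : ℝ) ^ t) := by
    filter_upwards [eventually_ge_atTop 2] with d hd
    have hd1 : (1:ℝ) ≤ (d:ℝ) := by exact_mod_cast le_trans (by norm_num) hd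
    have hd0 : (0:ℝ) < (d:ℝ) := by linarith
    have hdα : (0:ℝ) < (d:ℝ) ^ (α / 2) := Real.rpow_pos_of_pos hd0 _
    have hxpos : (0:ℝ) < (44:ℝ) ^ α * (Real.exp 1) ^ α * (d:ℝ) ^ (α / 2) :=
      mul_pos (mul_pos h44 hexp) hdα
    -- numerator bound
    have hnum : (d:ℝ) * Real.log 11 ≤ Real.log (n d) := by
      have h1 : Real.log ((11:ℝ) ^ d) ≤ Real.log (n d) :=
        Real.log_le_log (by positivity) (hn d hd)
      rwa [Real.log_pow] at h1
    -- rewrite ε d ^ (-s)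
    have hεs : (ε d) ^ (-s)
        = K * (d:ℝ) ^ ((α / 2) * s) := by
      rw [hε d, Real.inv_rpow hxpos.le, Real.rpow_neg hxpos.le, inv_inv,
        Real.mul_rpow (mul_pos h44 hexp).le hdα.le, ← Real.rpow_mul hd0.le]
    have hεle : (ε d) ^ (-s) ≤ K * (d:ℝ) := by
      rw [hεs]
      have : (d:ℝ) ^ ((α / 2) * s) ≤ (d:ℝ) ^ (1:ℝ) :=
        Real.rpow_le_rpow_of_exponent_le hd1 hαs
      rw [Real.rpow_one] at this
      exact mul_le_mul_of_nonneg_left this hKpos.le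
    have hdt : (d:ℝ) ^ t ≤ (d:ℝ) := by
      have : (d:ℝ) ^ t ≤ (d:ℝ) ^ (1:ℝ) :=
        Real.rpow_le_rpow_of_exponent_le hd1 ht'
      rwa [Real.rpow_one] at this
    have hBpos : 0 < (ε d) ^ (-s) + (d:ℝ) ^ t := by
      have h1 : 0 < (ε d) ^ (-s) := by
        rw [hεs]; positivity
      have h2 : 0 < (d:ℝ) ^ t := Real.rpow_pos_of_pos hd0 _
      linarith
    rw [le_div_iff₀ hBpos]
    have hBle : (ε d) ^ (-s) + (d:ℝ) ^ t ≤ (K + 1) * (d:ℝ) := by nlinarith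
    have hcK : c * (K + 1) = Real.log 11 := by
      rw [hc]; field_simp
    calc c * ((ε d) ^ (-s) + (d:ℝ) ^ t) ≤ c * ((K + 1) * (d:ℝ)) :=
          mul_le_mul_of_nonneg_left hBle hcpos.le
      _ = Real.log 11 * (d:ℝ) := by rw [← mul_assoc, hcK]
      _ ≤ Real.log (n d) := by linarith
  refine ⟨⟨c, hcpos, key⟩, ?_⟩
  intro h
  have hsmall : ∀ᶠ d : ℕ in atTop,
      Real.log (n d) / ((ε d) ^ (-s) + (d:ℝ) ^ t) < c :=
    h.eventually (gt_mem_nhds hcpos)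
  obtain ⟨d, h1, h2⟩ := (key.and hsmall).exists
  linarith
end

section
/- Define for ε ∈ (0,1], d ∈ ℕ the bound B(ε,d) := C · (√d · ln d) if ε ≥ exp(−4√d), and B(ε,d) := C · (ln ε^{-1})² if ε < exp(−4√d), where C > 1 is a constant. Then for all s > 0 and t > 1/2, and every sequence (ε_k, d_k) ∈ (0,1)×ℕ with ε_k^{-1} + d_k → ∞, one has B(ε_k, d_k) / (ε_k^{-s} + d_k^t) → 0. -/
open Filter Topology Real

/-! For `ε ≥ exp(-4√d)` the bound is at most `√d ln d / d^t = ln d / d^(t-1/2)`, and in that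
regime `ε⁻¹ + d ≤ exp(4√d) + d`, so `d → ∞`. For `ε < exp(-4√d)` put `L = ln ε⁻¹`; the bound is
at most `L² / ε^(-s) = L² e^(-sL)`, and `4√d < L` gives `ε⁻¹ + d ≤ 2 e^L`, so `L → ∞`. -/

theorem Filter.Tendsto.atTop_of_le_monotone_comp {ι : Type*} {l : Filter ι} {h : ℝ → ℝ}
    (hh : Monotone h) {u v : ι → ℝ} (hle : ∀ᶠ k in l, v k ≤ h (u k))
    (hv : Tendsto v l atTop) : Tendsto u l atTop := by
  refine tendsto_atTop.2 fun M => ?_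
  filter_upwards [hle, hv.eventually_gt_atTop (h M)] with k hk hM
  exact (hh.reflect_lt (hM.trans_le hk)).le

theorem sqrt_mul_div_rpow {x : ℝ} (hx : 0 < x) (a t : ℝ) :
    √x * a / x ^ t = a / x ^ (t - 1 / 2) := by
  rw [sqrt_eq_rpow, rpow_sub hx]
  have : x ^ (1 / 2 : ℝ) ≠ 0 := (rpow_pos_of_pos hx _).ne'
  field_simp

theorem le_exp_of_four_mul_sqrt_le {x L : ℝ} (hx : 0 ≤ x) (h : 4 * √x ≤ L) : x ≤ exp L := by
  have hL : 0 ≤ L := (mul_nonneg zero_le_four (sqrt_nonneg x)).trans h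
  calc x = √x ^ 2 := (sq_sqrt hx).symm
    _ ≤ (L / 4) ^ 2 := by gcongr; linarith
    _ ≤ L ^ 2 / Nat.factorial 2 := by norm_num; nlinarith [sq_nonneg L]
    _ ≤ exp L := pow_div_factorial_le_exp L hL 2

theorem rpow_neg_eq_exp_mul_log_inv {ε : ℝ} (hε : 0 < ε) (s : ℝ) :
    ε ^ (-s) = exp (s * log ε⁻¹) := by
  rw [rpow_def_of_pos hε, log_inv]
  ring_nf

section Branches

variable {ι : Type*} {l : Filter ι} {ε : ι → ℝ} {d : ι → ℕ}

theorem tendsto_sqrt_mul_log_div_of_exp_neg_le (s : ℝ) {t : ℝ} (ht : 1 / 2 < t)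
    (hε : ∀ k, 0 < ε k) (hto : Tendsto (fun k => (ε k)⁻¹ + (d k : ℝ)) l atTop)
    (hregime : ∀ᶠ k in l, exp (-4 * √(d k)) ≤ ε k) :
    Tendsto (fun k => √(d k) * log (d k) / (ε k ^ (-s) + (d k : ℝ) ^ t)) l (𝓝 0) := by
  have hd : Tendsto (fun k => (d k : ℝ)) l atTop := by
    refine hto.atTop_of_le_monotone_comp (h := fun x => exp (4 * √x) + x)
      (fun a b hab => by dsimp only; gcongr) ?_
    filter_upwards [hregime] with k hk
    have : (ε k)⁻¹ ≤ exp (4 * √(d k)) := by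
      simpa [exp_neg] using inv_anti₀ (exp_pos _) hk
    linarith
  have hlog : Tendsto (fun x : ℝ => log x / x ^ (t - 1 / 2)) atTop (𝓝 0) :=
    (isLittleO_log_rpow_atTop (by linarith)).tendsto_div_nhds_zero
  refine squeeze_zero' (Eventually.of_forall fun k => ?_) ?_ (hlog.comp hd)
  · exact div_nonneg (mul_nonneg (sqrt_nonneg _) (log_natCast_nonneg _))
      (add_nonneg (rpow_nonneg (hε k).le _) (rpow_nonneg (Nat.cast_nonneg _) _))
  filter_upwards [hd.eventually_ge_atTop 1] with k hk
  have hdpos : (0 : ℝ) < d k := one_pos.trans_le hk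
  calc √(d k) * log (d k) / (ε k ^ (-s) + (d k : ℝ) ^ t)
      ≤ √(d k) * log (d k) / (d k : ℝ) ^ t :=
        div_le_div_of_nonneg_left (mul_nonneg (sqrt_nonneg _) (log_nonneg hk))
          (rpow_pos_of_pos hdpos _) (le_add_of_nonneg_left (rpow_nonneg (hε k).le _))
    _ = log (d k) / (d k : ℝ) ^ (t - 1 / 2) := sqrt_mul_div_rpow hdpos _ _

theorem tendsto_log_inv_sq_div_of_lt_exp_neg {s : ℝ} (hs : 0 < s) (t : ℝ)
    (hε : ∀ k, 0 < ε k) (hto : Tendsto (fun k => (ε k)⁻¹ + (d k : ℝ)) l atTop)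
    (hregime : ∀ᶠ k in l, ε k < exp (-4 * √(d k))) :
    Tendsto (fun k => log (ε k)⁻¹ ^ 2 / (ε k ^ (-s) + (d k : ℝ) ^ t)) l (𝓝 0) := by
  have hL : Tendsto (fun k => log (ε k)⁻¹) l atTop := by
    refine hto.atTop_of_le_monotone_comp (h := fun x => 2 * exp x)
      (fun a b hab => by dsimp only; gcongr) ?_
    filter_upwards [hregime] with k hk
    have hsqrt : 4 * √(d k) ≤ log (ε k)⁻¹ := by
      have := log_lt_log (hε k) hk
      rw [log_exp] at this
      rw [log_inv]
      linarith
    have := le_exp_of_four_mul_sqrt_le (Nat.cast_nonneg _) hsqrt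
    rw [exp_log (inv_pos.2 (hε k))] at this ⊢
    linarith
  have hdecay : Tendsto (fun L : ℝ => L ^ (2 : ℝ) * exp (-s * L)) atTop (𝓝 0) :=
    tendsto_rpow_mul_exp_neg_mul_atTop_nhds_zero 2 s hs
  refine squeeze_zero (fun k => ?_) (fun k => ?_) (hdecay.comp hL)
  · exact div_nonneg (sq_nonneg _)
      (add_nonneg (rpow_nonneg (hε k).le _) (rpow_nonneg (Nat.cast_nonneg _) _))
  calc log (ε k)⁻¹ ^ 2 / (ε k ^ (-s) + (d k : ℝ) ^ t)
      ≤ log (ε k)⁻¹ ^ 2 / ε k ^ (-s) :=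
        div_le_div_of_nonneg_left (sq_nonneg _) (rpow_pos_of_pos (hε k) _)
          (le_add_of_nonneg_right (rpow_nonneg (Nat.cast_nonneg _) _))
    _ = log (ε k)⁻¹ ^ (2 : ℝ) * exp (-s * log (ε k)⁻¹) := by
        rw [rpow_neg_eq_exp_mul_log_inv (hε k), rpow_two, neg_mul, exp_neg, div_eq_mul_inv]

end Branches

theorem stmt13_general (C : ℝ) (B : ℝ → ℕ → ℝ)
    (hB : ∀ (e : ℝ) (d : ℕ), B e d =
      if Real.exp (-4 * Real.sqrt d) ≤ e then C * (Real.sqrt d * Real.log d)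
      else C * (Real.log e⁻¹) ^ 2)
    (s t : ℝ) (hs : 0 < s) (ht : 1 / 2 < t)
    (ε : ℕ → ℝ) (d : ℕ → ℕ) (hε : ∀ k, ε k ∈ Set.Ioo (0 : ℝ) 1)
    (hto : Tendsto (fun k => (ε k)⁻¹ + (d k : ℝ)) atTop atTop) :
    Tendsto (fun k => B (ε k) (d k) / ((ε k) ^ (-s) + (d k : ℝ) ^ t))
      atTop (nhds 0) := by
  have hε0 : ∀ k, 0 < ε k := fun k => (hε k).1
  simp only [hB, ite_div]
  refine Tendsto.if ?_ ?_
  · simpa [mul_div_assoc] using (tendsto_sqrt_mul_log_div_of_exp_neg_le s ht hε0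
      (hto.mono_left inf_le_left) (mem_inf_of_right (mem_principal_self _))).const_mul C
  · simpa [mul_div_assoc] using (tendsto_log_inv_sq_div_of_lt_exp_neg hs t hε0
      (hto.mono_left inf_le_left) (mem_inf_of_right (mem_principal_self _))).const_mul C

/-- With `B(ε,d) = C √d ln d` if `ε ≥ exp(-4√d)` and `B(ε,d) = C (ln ε⁻¹)²`
otherwise, for all `s > 0` and `t > 1/2` the quotient `B(ε_k,d_k)/(ε_k^{-s}+d_k^t)`
tends to `0` whenever `ε_k⁻¹ + d_k → ∞`. -/
theorem stmt13 (C : ℝ) (hC : 1 < C) (B : ℝ → ℕ → ℝ)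
    (hB : ∀ (e : ℝ) (d : ℕ), B e d =
      if Real.exp (-4 * Real.sqrt d) ≤ e then C * (Real.sqrt d * Real.log d)
      else C * (Real.log e⁻¹) ^ 2)
    (s t : ℝ) (hs : 0 < s) (ht : 1 / 2 < t)
    (ε : ℕ → ℝ) (d : ℕ → ℕ) (hε : ∀ k, ε k ∈ Set.Ioo (0 : ℝ) 1) (hd : ∀ k, 1 ≤ d k)
    (hto : Tendsto (fun k => (ε k)⁻¹ + (d k : ℝ)) atTop atTop) :
    Tendsto (fun k => B (ε k) (d k) / ((ε k) ^ (-s) + (d k : ℝ) ^ t))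
      atTop (nhds 0) :=
  stmt13_general C B hB s t hs ht ε d hε hto
end
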